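/- Let α > 0, β > 0, ξ ∈ ℝ, and let φ ∈ (0, π/2) satisfy sin²φ < 3/4. Then for every l > 0 the identity Im θ(l e^{iφ}, ξ) = l sinφ [ ξ + (12α − 16α sin²φ) l² + β/(4l²) ] holds. Moreover, if ρ₀ > 0 satisfies ρ₀⁴ ≤ β / (4(12α − 16α sin²φ)), then for all 0 < l ≤ ρ₀ one has Im θ(l e^{iφ}, ξ) ≥ l sinφ [ ξ + (12α − 16α sin²φ) ρ₀² + β/(4ρ₀²) ] and Im θ(l e^{−iφ}, ξ) ≤ − l sinφ [ ξ + (12α − 16α sin²φ) ρ₀² + β/(4ρ₀²) ]. -/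

import Mathlib

/-- The phase function `θ(k, ξ) = kξ + 4αk³ − β/(4k)` for `k ∈ ℂ ∖ {0}`. -/
noncomputable def theta (α β ξ : ℝ) (k : ℂ) : ℂ :=
  k * (ξ : ℂ) + 4 * (α : ℂ) * k ^ 3 - (β : ℂ) / (4 * k)

lemma im_theta (α β ξ l t : ℝ) (hl : l ≠ 0) :
    (theta α β ξ ((l:ℂ) * Complex.exp (Complex.I * (t:ℂ)))).im
      = l * Real.sin t * ξ + 4*α*l^3*Real.sin (3*t) + β/(4*l)*Real.sin t := by
  have h1 : Complex.I * (t:ℂ) = (t:ℂ) * Complex.I := mul_comm _ _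
  rw [h1, Complex.exp_mul_I, ← Complex.ofReal_cos, ← Complex.ofReal_sin]
  have hsc := Real.sin_sq_add_cos_sq t
  have h3 := Real.sin_three_mul t
  simp only [theta, Complex.sub_im, Complex.add_im, Complex.div_im, Complex.mul_im,
    Complex.mul_re, Complex.normSq_apply, pow_succ, pow_zero, one_mul,
    Complex.ofReal_re, Complex.ofReal_im, Complex.I_re, Complex.I_im,
    Complex.add_re, Complex.re_ofNat, Complex.im_ofNat]
  have hl2 : (0:ℝ) < l^2 := by positivity
  field_simp
  ring_nf
  rw [show l ^ 2 * Real.cos t ^ 2 * 16 + l ^ 2 * Real.sin t ^ 2 * 16 = 16*l^2 by nlinarith]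
  rw [show Real.sin (t*3) = Real.sin (3*t) by ring_nf]
  field_simp
  linear_combination (-16*l^4*α) * h3 + 48*l^4*α*Real.sin t * hsc

lemma im_theta' (α β ξ l t : ℝ) (hl : l ≠ 0) :
    (theta α β ξ ((l:ℂ) * Complex.exp (Complex.I * (t:ℂ)))).im
      = l * Real.sin t * (ξ + (12*α - 16*α*Real.sin t^2) * l^2 + β/(4*l^2)) := by
  rw [im_theta α β ξ l t hl, Real.sin_three_mul t]
  have hl2 : (0:ℝ) < l^2 := by positivity
  field_simp
  ring

/-- Exact formula for `Im θ` on the ray `k = l e^{iφ}` and the resulting monotone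
lower/upper bounds near the origin. -/
theorem stmt12 (α β ξ φ : ℝ) (hα : 0 < α) (hβ : 0 < β)
    (hφ1 : 0 < φ) (hφ2 : φ < Real.pi / 2) (hφ3 : Real.sin φ ^ 2 < 3 / 4) :
    (∀ l : ℝ, 0 < l →
      (theta α β ξ ((l : ℂ) * Complex.exp (Complex.I * (φ : ℂ)))).im
        = l * Real.sin φ
            * (ξ + (12 * α - 16 * α * Real.sin φ ^ 2) * l ^ 2 + β / (4 * l ^ 2))) ∧
    (∀ ρ₀ : ℝ, 0 < ρ₀ → ρ₀ ^ 4 ≤ β / (4 * (12 * α - 16 * α * Real.sin φ ^ 2)) →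
      ∀ l : ℝ, 0 < l → l ≤ ρ₀ →
        l * Real.sin φ
            * (ξ + (12 * α - 16 * α * Real.sin φ ^ 2) * ρ₀ ^ 2 + β / (4 * ρ₀ ^ 2))
          ≤ (theta α β ξ ((l : ℂ) * Complex.exp (Complex.I * (φ : ℂ)))).im ∧
        (theta α β ξ ((l : ℂ) * Complex.exp (-(Complex.I * (φ : ℂ))))).im
          ≤ -(l * Real.sin φ
              * (ξ + (12 * α - 16 * α * Real.sin φ ^ 2) * ρ₀ ^ 2 + β / (4 * ρ₀ ^ 2)))) := by
  set c : ℝ := 12 * α - 16 * α * Real.sin φ ^ 2 with hc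
  have hcpos : 0 < c := by nlinarith
  have hs : 0 < Real.sin φ := Real.sin_pos_of_pos_of_lt_pi hφ1
    (lt_trans hφ2 (by linarith [Real.pi_pos]))
  refine ⟨fun l hl => im_theta' α β ξ l φ hl.ne', fun ρ₀ hρ hρ4 l hl hlρ => ?_⟩
  have hl2 : (0:ℝ) < l^2 := by positivity
  have hρ2 : (0:ℝ) < ρ₀^2 := by positivity
  have h4c : ρ₀^4 * (4*c) ≤ β := by
    rwa [le_div_iff₀ (by positivity)] at hρ4
  have hb : c * ρ₀ ^ 2 + β / (4 * ρ₀ ^ 2) ≤ c * l ^ 2 + β / (4 * l ^ 2) := by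
    have key : β / (4*l^2) - β / (4*ρ₀^2) - c*(ρ₀^2 - l^2)
        = (ρ₀^2 - l^2) * (β - 4*c*l^2*ρ₀^2) / (4*l^2*ρ₀^2) := by
      field_simp
    have hnum : 0 ≤ (ρ₀^2 - l^2) * (β - 4*c*l^2*ρ₀^2) := by
      apply mul_nonneg
      · nlinarith
      · nlinarith [sq_nonneg (l*ρ₀), mul_le_mul_of_nonneg_left
          (mul_le_mul_of_nonneg_left (sq_le_sq' (by linarith) hlρ) hρ2.le) (by positivity : (0:ℝ) ≤ 4*c)]
    have : 0 ≤ β / (4*l^2) - β / (4*ρ₀^2) - c*(ρ₀^2 - l^2) := by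
      rw [key]; positivity
    linarith
  have hbr : ξ + c * ρ₀ ^ 2 + β / (4 * ρ₀ ^ 2) ≤ ξ + c * l ^ 2 + β / (4 * l ^ 2) := by
    linarith
  have hls : 0 ≤ l * Real.sin φ := by positivity
  have hmain := mul_le_mul_of_nonneg_left hbr hls
  constructor
  · rw [im_theta' α β ξ l φ hl.ne']
    exact hmain
  · have hneg : -(Complex.I * (φ:ℂ)) = Complex.I * (((-φ : ℝ)):ℂ) := by
      push_cast; ring
    rw [hneg, im_theta' α β ξ l (-φ) hl.ne']
    simp only [Real.sin_neg, neg_sq]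
    nlinarith [hmain]
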